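/- Let φ ∈ C₀ and set Δ_N(φ) := M_N(φ) − M_{N−1}(((N−1)/N)φ) and ψ := (1 − 1/N)φ + (1/N)φ̂. Then: (i) φ̂ ∈ C₀; (ii) M_N(ψ) = M_{N−1}(((N−1)/N)φ); (iii) ψ ≥ φ − Δ_N(φ) pointwise; and (iv) for every ρ ∈ 𝒫⁻, ∫ψ dρ − M_N(ψ) ≥ ∫φ dρ − M_N(φ) + (1 − ‖ρ‖)·Δ_N(φ). -/

import Mathlib

open MeasureTheory Filter Topology OnePoint
open scoped ENNReal NNReal

noncomputable section

/-- Euclidean space ℝ^d. -/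
abbrev Ed (d : ℕ) := EuclideanSpace ℝ (Fin d)

/-- The Coulomb cost on (ℝ^d)^k: `c_k(x) = Σ_{i<j} 1/|x_i - x_j|`,
valued in (0,+∞] with the convention 1/0 = +∞. -/
def coulomb (d k : ℕ) (x : Fin k → Ed d) : ℝ≥0∞ :=
  ∑ i : Fin k, ∑ j : Fin k, if i < j then (edist (x i) (x j))⁻¹ else 0

/-- `M_k(φ) = sup { (1/k) Σ_i φ(x_i) - c_k(x) : x ∈ (ℝ^d)^k }` for φ bounded above
(tuples with `c_k(x) = +∞` contribute -∞ and hence are discarded). -/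
def Mfun (d k : ℕ) (φ : Ed d → ℝ) : ℝ :=
  sSup { r : ℝ | ∃ x : Fin k → Ed d, coulomb d k x ≠ ⊤ ∧
    r = (∑ i, φ (x i)) / (k : ℝ) - (coulomb d k x).toReal }

/-- Membership in C₀: continuous and vanishing at infinity. -/
def IsC0 (d : ℕ) (φ : Ed d → ℝ) : Prop :=
  Continuous φ ∧ Tendsto φ (cocompact (Ed d)) (𝓝 0)

/-- `N c_N(x, y_1, …, y_{N-1})` written with the first point separated:
`N (Σ_i 1/|x - y_i| + c_{N-1}(y))`. -/
def headCost (d m : ℕ) (x : Ed d) (y : Fin m → Ed d) : ℝ≥0∞ :=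
  (∑ i : Fin m, (edist x (y i))⁻¹) + coulomb d m y

/-- The regularization `φ̂(x) = inf_{x_2,…,x_N} { N c_N(x,x_2,…,x_N) - Σ_{i≥2} φ(x_i) }
+ N M_{N-1}(((N-1)/N) φ)` of a function φ ∈ C₀ (tuples of infinite cost contribute +∞
and hence are discarded from the infimum). -/
def hatphi (d N : ℕ) (φ : Ed d → ℝ) (x : Ed d) : ℝ :=
  sInf { r : ℝ | ∃ y : Fin (N - 1) → Ed d, headCost d (N - 1) x y ≠ ⊤ ∧
      r = (N : ℝ) * (headCost d (N - 1) x y).toReal - ∑ i, φ (y i) }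
    + (N : ℝ) * Mfun d (N - 1) (fun z => (((N : ℝ) - 1) / N) * φ z)

/-- spread configuration -/
lemma exists_spread (d : ℕ) (hd : 1 ≤ d) (k : ℕ) (x : Ed d) (R : ℝ) (hR : 1 ≤ R) :
    ∃ y : Fin k → Ed d, (∀ i, R ≤ dist x (y i)) ∧
      ∀ i j : Fin k, i ≠ j → R ≤ dist (y i) (y j) := by
  obtain ⟨e, he⟩ : ∃ e : Ed d, ‖e‖ = 1 :=
    ⟨EuclideanSpace.single ⟨0, hd⟩ (1:ℝ), by simp [EuclideanSpace.norm_single]⟩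
  refine ⟨fun i => x + ((((i:ℕ):ℝ)+1) * R) • e, fun i => ?_, fun i j hij => ?_⟩
  · have h1 : dist x (x + ((((i:ℕ):ℝ)+1) * R) • e) = (((i:ℕ):ℝ)+1) * R := by
      rw [dist_eq_norm]
      have h2 : x - (x + ((((i:ℕ):ℝ)+1) * R) • e) = -(((((i:ℕ):ℝ)+1) * R) • e) := by abel
      rw [h2, norm_neg, norm_smul, he, mul_one, Real.norm_eq_abs, abs_of_nonneg (by positivity)]
    rw [h1]
    nlinarith [(Nat.cast_nonneg (i:ℕ) : (0:ℝ) ≤ ((i:ℕ):ℝ))]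
  · have hcast : (1:ℝ) ≤ |((i:ℕ):ℝ) - ((j:ℕ):ℝ)| := by
      have h1 : ((i:ℕ):ℤ) ≠ ((j:ℕ):ℤ) := fun h => hij (Fin.ext (by exact_mod_cast h))
      have h3 := Int.one_le_abs (sub_ne_zero.mpr h1)
      calc (1:ℝ) ≤ ((|((i:ℕ):ℤ) - ((j:ℕ):ℤ)| : ℤ) : ℝ) := by exact_mod_cast h3
        _ = |((i:ℕ):ℝ) - ((j:ℕ):ℝ)| := by push_cast; ring_nf
    have h4 : dist (x + ((((i:ℕ):ℝ)+1) * R) • e) (x + ((((j:ℕ):ℝ)+1) * R) • e)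
        = |((i:ℕ):ℝ) - ((j:ℕ):ℝ)| * R := by
      rw [dist_eq_norm]
      have h2 : (x + ((((i:ℕ):ℝ)+1) * R) • e) - (x + ((((j:ℕ):ℝ)+1) * R) • e)
          = (((((i:ℕ):ℝ)+1) * R) - ((((j:ℕ):ℝ)+1) * R)) • e := by
        rw [sub_smul]; abel
      rw [h2, norm_smul, he, mul_one]
      have h5 : ((((i:ℕ):ℝ)+1) * R) - ((((j:ℕ):ℝ)+1) * R)
          = (((i:ℕ):ℝ) - ((j:ℕ):ℝ)) * R := by ring
      rw [h5, Real.norm_eq_abs, abs_mul, abs_of_nonneg (by linarith : (0:ℝ) ≤ R)]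
    rw [h4]
    nlinarith

lemma inv_edist_le {X : Type*} [MetricSpace X] (a b : X) (R : ℝ) (hR : 0 < R)
    (h : R ≤ dist a b) : (edist a b)⁻¹ ≤ ENNReal.ofReal R⁻¹ := by
  rw [ENNReal.ofReal_inv_of_pos hR]
  apply ENNReal.inv_le_inv.2
  rw [edist_dist]
  exact ENNReal.ofReal_le_ofReal h

lemma coulomb_le_of_spread (d k : ℕ) (y : Fin k → Ed d)
    (h : ∀ i j : Fin k, i ≠ j → 1 ≤ dist (y i) (y j)) :
    coulomb d k y ≤ (k*k : ℕ) := by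
  have : coulomb d k y ≤ ∑ _i : Fin k, ∑ _j : Fin k, (1:ℝ≥0∞) := by
    apply Finset.sum_le_sum; intro i _; apply Finset.sum_le_sum; intro j _
    by_cases hij : i < j
    · simp only [hij, if_true]
      have := inv_edist_le (y i) (y j) 1 one_pos (h i j (ne_of_lt hij))
      simpa using this
    · simp [hij]
  simpa using this

lemma headCost_le_of_spread (d k : ℕ) (x : Ed d) (y : Fin k → Ed d)
    (hx : ∀ i, 1 ≤ dist x (y i))
    (h : ∀ i j : Fin k, i ≠ j → 1 ≤ dist (y i) (y j)) :
    headCost d k x y ≤ (k + k*k : ℕ) := by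
  have h1 : (∑ i : Fin k, (edist x (y i))⁻¹) ≤ (k:ℝ≥0∞) := by
    have : (∑ i : Fin k, (edist x (y i))⁻¹) ≤ ∑ _i : Fin k, (1:ℝ≥0∞) := by
      apply Finset.sum_le_sum; intro i _
      simpa using inv_edist_le x (y i) 1 one_pos (hx i)
    simpa using this
  have h2 := coulomb_le_of_spread d k y h
  calc headCost d k x y ≤ (k:ℝ≥0∞) + (k*k:ℕ) := add_le_add h1 h2
    _ = (k + k*k : ℕ) := by push_cast; ring

lemma headCost_ne_top_of_spread (d k : ℕ) (x : Ed d) (y : Fin k → Ed d)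
    (hx : ∀ i, 1 ≤ dist x (y i))
    (h : ∀ i j : Fin k, i ≠ j → 1 ≤ dist (y i) (y j)) :
    headCost d k x y ≠ ⊤ :=
  ne_top_of_le_ne_top (ENNReal.natCast_ne_top _) (headCost_le_of_spread d k x y hx h)

lemma coulomb_le_headCost (d k : ℕ) (x : Ed d) (y : Fin k → Ed d) :
    coulomb d k y ≤ headCost d k x y := le_add_self
/-- cons identity: c_{m+1}(x :: y) = headCost(x, y) -/
lemma coulomb_cons (d m : ℕ) (x : Ed d) (y : Fin m → Ed d) :
    coulomb d (m+1) (Fin.cons x y) = headCost d m x y := by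
  unfold coulomb headCost
  rw [Fin.sum_univ_succ]
  congr 1
  · rw [Fin.sum_univ_succ]
    simp only [Fin.cons_zero, Fin.cons_succ]
    simp
  · rw [Finset.sum_congr rfl (fun i _ => ?_)]
    · rfl
    rw [Fin.sum_univ_succ]
    simp only [Fin.cons_zero, Fin.cons_succ]
    have h0 : ¬ (Fin.succ i < 0) := by simp
    rw [if_neg h0]
    simp only [Fin.succ_lt_succ_iff]
    simp
/-- key identity: Σ_i headCost(x_i, x∘σ_i) = (m+1) • c_{m+1}(x) -/
lemma sum_headCost_succAbove (d m : ℕ) (x : Fin (m+1) → Ed d) :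
    ∑ i : Fin (m+1), headCost d m (x i) (fun j => x (i.succAbove j))
      = (m+1) • coulomb d (m+1) x := by
  set e : Fin (m+1) → Fin (m+1) → ℝ≥0∞ :=
    fun a b => if a < b then (edist (x a) (x b))⁻¹ else 0 with he
  set f : Fin (m+1) → Fin (m+1) → ℝ≥0∞ :=
    fun a b => if a = b then 0 else (edist (x a) (x b))⁻¹ with hf
  have hC : coulomb d (m+1) x = ∑ a, ∑ b, e a b := rfl
  have hfe : ∀ a b, f a b = e a b + e b a := by
    intro a b
    rcases lt_trichotomy a b with h | h | h
    · simp [hf, he, h, ne_of_lt h, not_lt.2 (le_of_lt h)]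
    · simp [hf, he, h, lt_irrefl]
    · simp [hf, he, h, (ne_of_lt h).symm, not_lt.2 (le_of_lt h), edist_comm]
  have hdouble : (∑ a, ∑ b, f a b) = (∑ a, ∑ b, e a b) + (∑ a, ∑ b, e a b) := by
    have h1 : (∑ a, ∑ b, f a b) = (∑ a, ∑ b, (e a b + e b a)) := by
      simp only [hfe]
    have h2 : (∑ a : Fin (m+1), ∑ b : Fin (m+1), (e a b + e b a))
        = (∑ a : Fin (m+1), ∑ b : Fin (m+1), e a b)
          + (∑ a : Fin (m+1), ∑ b : Fin (m+1), e b a) := by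
      rw [← Finset.sum_add_distrib]
      exact Finset.sum_congr rfl fun a _ => Finset.sum_add_distrib
    have h3 : (∑ a : Fin (m+1), ∑ b : Fin (m+1), e b a)
        = (∑ a : Fin (m+1), ∑ b : Fin (m+1), e a b) := Finset.sum_comm
    rw [h1, h2, h3]
  have hrow : ∀ i : Fin (m+1),
      (∑ j : Fin m, (edist (x i) (x (i.succAbove j)))⁻¹) = ∑ b, f i b := by
    intro i
    rw [Fin.sum_univ_succAbove (fun b => f i b) i]
    have hii : f i i = 0 := by simp [hf]
    rw [hii, zero_add]
    exact Finset.sum_congr rfl fun j _ => by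
      simp [hf, Ne.symm (Fin.succAbove_ne i j)]
  have hcol : ∀ i : Fin (m+1), (∑ j : Fin m, e (i.succAbove j) i) = ∑ a, e a i := by
    intro i
    rw [Fin.sum_univ_succAbove (fun a => e a i) i]
    simp only [he, lt_irrefl, if_false, zero_add]
  have hsub : ∀ i : Fin (m+1), coulomb d m (fun j => x (i.succAbove j))
      = ∑ j : Fin m, ∑ k : Fin m, e (i.succAbove j) (i.succAbove k) := by
    intro i
    unfold coulomb
    refine Finset.sum_congr rfl fun j _ => Finset.sum_congr rfl fun k _ => ?_
    simp only [he, Fin.succAbove_lt_succAbove_iff]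
  have hdecomp : ∀ i : Fin (m+1), (∑ a, ∑ b, e a b)
      = (∑ b, e i b) + (∑ a, e a i) + coulomb d m (fun j => x (i.succAbove j)) := by
    intro i
    rw [Fin.sum_univ_succAbove (fun a => ∑ b, e a b) i]
    have h4 : ∀ j : Fin m, (∑ b, e (i.succAbove j) b)
        = e (i.succAbove j) i + ∑ k : Fin m, e (i.succAbove j) (i.succAbove k) :=
      fun j => Fin.sum_univ_succAbove (fun b => e (i.succAbove j) b) i
    rw [Finset.sum_congr rfl (fun j _ => h4 j), Finset.sum_add_distrib, hcol i, hsub i]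
    ring
  have hhead : ∀ i : Fin (m+1), headCost d m (x i) (fun j => x (i.succAbove j))
      = (∑ b, f i b) + coulomb d m (fun j => x (i.succAbove j)) := by
    intro i
    unfold headCost
    rw [hrow i]
  calc ∑ i : Fin (m+1), headCost d m (x i) (fun j => x (i.succAbove j))
      = ∑ i : Fin (m+1), ((∑ b, f i b) + coulomb d m (fun j => x (i.succAbove j))) :=
        Finset.sum_congr rfl fun i _ => hhead i
    _ = (∑ i, ∑ b, f i b) + ∑ i : Fin (m+1), coulomb d m (fun j => x (i.succAbove j)) :=
        Finset.sum_add_distrib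
    _ = (∑ a, ∑ b, e a b) + (∑ a, ∑ b, e a b)
        + ∑ i : Fin (m+1), coulomb d m (fun j => x (i.succAbove j)) := by rw [hdouble]
    _ = ∑ i : Fin (m+1), ((∑ b, e i b) + (∑ a, e a i)
          + coulomb d m (fun j => x (i.succAbove j))) := by
        rw [Finset.sum_add_distrib, Finset.sum_add_distrib]
        congr 1
        congr 1
        exact Finset.sum_comm
    _ = ∑ _i : Fin (m+1), (∑ a, ∑ b, e a b) :=
        Finset.sum_congr rfl fun i _ => (hdecomp i).symm
    _ = (m+1) • coulomb d (m+1) x := by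
        rw [Finset.sum_const, hC]
        simp
def MSet (d k : ℕ) (χ : Ed d → ℝ) : Set ℝ :=
  { r : ℝ | ∃ x : Fin k → Ed d, coulomb d k x ≠ ⊤ ∧
    r = (∑ i, χ (x i)) / (k : ℝ) - (coulomb d k x).toReal }

lemma Mfun_eq (d k : ℕ) (χ : Ed d → ℝ) : Mfun d k χ = sSup (MSet d k χ) := rfl

lemma coulomb_ne_top_of_spread (d k : ℕ) (y : Fin k → Ed d)
    (h : ∀ i j : Fin k, i ≠ j → 1 ≤ dist (y i) (y j)) : coulomb d k y ≠ ⊤ :=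
  ne_top_of_le_ne_top (ENNReal.natCast_ne_top _) (coulomb_le_of_spread d k y h)

lemma MSet_nonempty (d k : ℕ) (hd : 1 ≤ d) (χ : Ed d → ℝ) : (MSet d k χ).Nonempty := by
  obtain ⟨y, -, hy⟩ := exists_spread d hd k 0 1 le_rfl
  exact ⟨_, y, coulomb_ne_top_of_spread d k y hy, rfl⟩

lemma MSet_bddAbove (d k : ℕ) (χ : Ed d → ℝ) (B : ℝ) (hB0 : 0 ≤ B)
    (hB : ∀ x, χ x ≤ B) : BddAbove (MSet d k χ) := by
  refine ⟨B, fun r hr => ?_⟩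
  obtain ⟨x, hx, rfl⟩ := hr
  have h1 : (∑ i, χ (x i)) ≤ (k : ℝ) * B := by
    calc (∑ i, χ (x i)) ≤ ∑ _i : Fin k, B := Finset.sum_le_sum fun i _ => hB (x i)
      _ = (k : ℝ) * B := by simp [mul_comm]
  have h2 : (∑ i, χ (x i)) / (k : ℝ) ≤ B := by
    rcases Nat.eq_zero_or_pos k with hk | hk
    · subst hk; simp [hB0]
    · rw [div_le_iff₀ (by exact_mod_cast hk)]
      calc (∑ i, χ (x i)) ≤ (k:ℝ) * B := h1
        _ = B * k := by ring
  have h3 : 0 ≤ (coulomb d k x).toReal := ENNReal.toReal_nonneg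
  linarith

lemma le_Mfun (d k : ℕ) (χ : Ed d → ℝ) (B : ℝ) (hB0 : 0 ≤ B) (hB : ∀ x, χ x ≤ B)
    (x : Fin k → Ed d) (hx : coulomb d k x ≠ ⊤) :
    (∑ i, χ (x i)) / (k : ℝ) - (coulomb d k x).toReal ≤ Mfun d k χ :=
  le_csSup (MSet_bddAbove d k χ B hB0 hB) ⟨x, hx, rfl⟩

lemma Mfun_le (d k : ℕ) (hd : 1 ≤ d) (χ : Ed d → ℝ) (B : ℝ)
    (h : ∀ r ∈ MSet d k χ, r ≤ B) : Mfun d k χ ≤ B :=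
  csSup_le (MSet_nonempty d k hd χ) h

lemma Mfun_approx (d k : ℕ) (hd : 1 ≤ d) (χ : Ed d → ℝ) (ε : ℝ) (hε : 0 < ε) :
    ∃ x : Fin k → Ed d, coulomb d k x ≠ ⊤ ∧
      Mfun d k χ - ε < (∑ i, χ (x i)) / (k : ℝ) - (coulomb d k x).toReal := by
  obtain ⟨r, hr, hlt⟩ := exists_lt_of_lt_csSup (MSet_nonempty d k hd χ)
    (show Mfun d k χ - ε < sSup (MSet d k χ) by rw [← Mfun_eq]; linarith)
  obtain ⟨x, hx, rfl⟩ := hr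
  exact ⟨x, hx, hlt⟩

lemma Mfun_mono (d k : ℕ) (hd : 1 ≤ d) (χ₁ χ₂ : Ed d → ℝ)
    (h : ∀ x, χ₁ x ≤ χ₂ x) (h2 : BddAbove (MSet d k χ₂)) :
    Mfun d k χ₁ ≤ Mfun d k χ₂ := by
  rw [Mfun_eq, Mfun_eq]
  apply csSup_le (MSet_nonempty d k hd χ₁)
  rintro r ⟨x, hx, rfl⟩
  have h3 : (∑ i, χ₁ (x i)) / (k : ℝ) - (coulomb d k x).toReal
      ≤ (∑ i, χ₂ (x i)) / (k : ℝ) - (coulomb d k x).toReal := by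
    have : (∑ i, χ₁ (x i)) ≤ (∑ i, χ₂ (x i)) := Finset.sum_le_sum fun i _ => h (x i)
    have h4 : (∑ i, χ₁ (x i)) / (k : ℝ) ≤ (∑ i, χ₂ (x i)) / (k : ℝ) := by
      rcases Nat.eq_zero_or_pos k with hk | hk
      · subst hk; simp
      · exact (div_le_div_iff_of_pos_right (by exact_mod_cast hk)).2 this
    linarith
  exact h3.trans (le_csSup h2 ⟨x, hx, rfl⟩)

lemma Mfun_sub_const (d k : ℕ) (hd : 1 ≤ d) (hk : 0 < k) (χ : Ed d → ℝ) (c : ℝ)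
    (B : ℝ) (hB0 : 0 ≤ B) (hB : ∀ x, |χ x| ≤ B) :
    Mfun d k (fun x => χ x - c) = Mfun d k χ - c := by
  have hkR : (0:ℝ) < (k:ℝ) := by exact_mod_cast hk
  have key : ∀ x : Fin k → Ed d, (∑ i, (χ (x i) - c)) / (k:ℝ)
      = (∑ i, χ (x i)) / (k:ℝ) - c := by
    intro x
    rw [Finset.sum_sub_distrib]
    simp only [Finset.sum_const, Finset.card_univ, Fintype.card_fin, nsmul_eq_mul]
    field_simp
  apply le_antisymm
  · apply Mfun_le d k hd _ _
    rintro r ⟨x, hx, rfl⟩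
    rw [key x]
    have := le_Mfun d k χ B hB0 (fun z => (abs_le.1 (hB z)).2) x hx
    linarith
  · rw [sub_le_iff_le_add]
    apply Mfun_le d k hd _ _
    rintro r ⟨x, hx, rfl⟩
    have := le_Mfun d k (fun z => χ z - c) (B + |c|) (by positivity)
      (fun z => by show χ z - c ≤ B + |c|; have h5 := (abs_le.1 (hB z)).2; linarith [neg_abs_le c]) x hx
    rw [key x] at this
    linarith
/-- the scaled function ((N-1)/N)φ -/
def tphi (d m : ℕ) (φ : Ed d → ℝ) : Ed d → ℝ :=
  fun z => ((((m+1:ℕ)) : ℝ) - 1) / ((m+1:ℕ) : ℝ) * φ z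

def Aconst (d m : ℕ) (φ : Ed d → ℝ) : ℝ := Mfun d m (tphi d m φ)

def TSet (d m : ℕ) (φ : Ed d → ℝ) (x : Ed d) : Set ℝ :=
  { r : ℝ | ∃ y : Fin m → Ed d, headCost d m x y ≠ ⊤ ∧
      r = ((m+1:ℕ) : ℝ) * (headCost d m x y).toReal - ∑ i, φ (y i) }

def F0 (d m : ℕ) (φ : Ed d → ℝ) (x : Ed d) : ℝ := sInf (TSet d m φ x)

lemma hatphi_eq (d m : ℕ) (φ : Ed d → ℝ) (x : Ed d) :
    hatphi d (m+1) φ x = F0 d m φ x + ((m+1:ℕ) : ℝ) * Aconst d m φ := rfl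

lemma bound_of_isC0 {d : ℕ} {φ : Ed d → ℝ} (hφ : IsC0 d φ) :
    ∃ B : ℝ, 0 ≤ B ∧ ∀ x, |φ x| ≤ B := by
  have h1 : ∀ᶠ x in cocompact (Ed d), φ x ∈ Metric.ball (0:ℝ) 1 :=
    hφ.2 (Metric.ball_mem_nhds 0 one_pos)
  rw [Filter.eventually_iff, Filter.mem_cocompact] at h1
  obtain ⟨K, hK, hsub⟩ := h1
  obtain ⟨C, hC⟩ := hK.exists_bound_of_continuousOn hφ.1.continuousOn
  refine ⟨max C 1, le_trans zero_le_one (le_max_right _ _), fun x => ?_⟩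
  by_cases hx : x ∈ K
  · exact le_trans (by simpa using hC x hx) (le_max_left _ _)
  · have := hsub hx
    simp only [Set.mem_setOf_eq, Metric.mem_ball, Real.dist_eq, sub_zero] at this
    exact le_trans (le_of_lt this) (le_max_right _ _)


lemma tphi_le (d m : ℕ) (φ : Ed d → ℝ) (B : ℝ) (hB0 : 0 ≤ B) (hB : ∀ x, |φ x| ≤ B)
    (z : Ed d) : tphi d m φ z ≤ B := by
  have h2 : (0:ℝ) < ((m+1:ℕ) : ℝ) := by positivity
  have h3 : ((((m+1:ℕ)) : ℝ) - 1) / ((m+1:ℕ) : ℝ) ≤ 1 := by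
    rw [div_le_one h2]; linarith
  have h4 : (0:ℝ) ≤ ((((m+1:ℕ)) : ℝ) - 1) / ((m+1:ℕ) : ℝ) := by
    apply div_nonneg _ (le_of_lt h2); push_cast; linarith
  unfold tphi
  rcases le_or_gt (φ z) 0 with h | h
  · nlinarith [mul_nonpos_of_nonneg_of_nonpos h4 h]
  · nlinarith [(abs_le.1 (hB z)).2]

lemma TSet_nonempty (d m : ℕ) (hd : 1 ≤ d) (φ : Ed d → ℝ) (x : Ed d) :
    (TSet d m φ x).Nonempty := by
  obtain ⟨y, hy1, hy2⟩ := exists_spread d hd m x 1 le_rfl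
  exact ⟨_, y, headCost_ne_top_of_spread d m x y hy1 hy2, rfl⟩

lemma TSet_bddBelow (d m : ℕ) (φ : Ed d → ℝ) (B : ℝ) (hB : ∀ x, |φ x| ≤ B) (x : Ed d) :
    BddBelow (TSet d m φ x) := by
  refine ⟨-((m:ℝ) * B), ?_⟩
  rintro r ⟨y, hy, rfl⟩
  have h1 : (∑ i, φ (y i)) ≤ (m:ℝ) * B := by
    calc (∑ i, φ (y i)) ≤ ∑ _i : Fin m, B := Finset.sum_le_sum fun i _ => (abs_le.1 (hB (y i))).2
      _ = (m:ℝ) * B := by simp [mul_comm]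
  have h2 : (0:ℝ) ≤ ((m+1:ℕ) : ℝ) * (headCost d m x y).toReal := by positivity
  linarith

/-- P1: F0 ≥ -(m+1) A -/
lemma F0_ge (d m : ℕ) (hd : 1 ≤ d) (hm : 1 ≤ m) (φ : Ed d → ℝ)
    (B : ℝ) (hB0 : 0 ≤ B) (hB : ∀ x, |φ x| ≤ B) (x : Ed d) :
    -(((m+1:ℕ) : ℝ) * Aconst d m φ) ≤ F0 d m φ x := by
  apply le_csInf (TSet_nonempty d m hd φ x)
  rintro r ⟨y, hy, rfl⟩
  have hcy : coulomb d m y ≠ ⊤ := ne_top_of_le_ne_top hy (coulomb_le_headCost d m x y)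
  have hsle : (∑ i, tphi d m φ (y i)) / (m : ℝ) - (coulomb d m y).toReal ≤ Aconst d m φ :=
    le_Mfun d m (tphi d m φ) B hB0 (fun z => tphi_le d m φ B hB0 hB z) y hcy
  have hmpos : (0:ℝ) < (m:ℝ) := by exact_mod_cast hm
  have hnpos : (0:ℝ) < ((m+1:ℕ) : ℝ) := by positivity
  have hsum : (∑ i, tphi d m φ (y i)) = (m:ℝ) / ((m+1:ℕ) : ℝ) * (∑ i, φ (y i)) := by
    unfold tphi
    rw [← Finset.mul_sum]
    congr 2
    push_cast; ring
  have heq : (∑ i, tphi d m φ (y i)) / (m:ℝ) = (∑ i, φ (y i)) / ((m+1:ℕ) : ℝ) := by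
    rw [hsum]; field_simp
  rw [heq] at hsle
  have h6 : (∑ i, φ (y i)) / ((m+1:ℕ) : ℝ) ≤ Aconst d m φ + (coulomb d m y).toReal := by
    linarith
  rw [div_le_iff₀ hnpos] at h6
  have hct : (coulomb d m y).toReal ≤ (headCost d m x y).toReal :=
    ENNReal.toReal_mono hy (coulomb_le_headCost d m x y)
  nlinarith [ENNReal.toReal_nonneg (a := headCost d m x y)]
lemma tphi_sum_div (d m : ℕ) (hm : 1 ≤ m) (φ : Ed d → ℝ) (y : Fin m → Ed d) :
    (∑ i, tphi d m φ (y i)) / (m:ℝ) = (∑ i, φ (y i)) / ((m+1:ℕ) : ℝ) := by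
  have hmpos : (0:ℝ) < (m:ℝ) := by exact_mod_cast hm
  have hnpos : (0:ℝ) < ((m+1:ℕ) : ℝ) := by positivity
  have hsum : (∑ i, tphi d m φ (y i)) = (m:ℝ) / ((m+1:ℕ) : ℝ) * (∑ i, φ (y i)) := by
    unfold tphi
    rw [← Finset.mul_sum]
    congr 2
    push_cast; ring
  rw [hsum]; field_simp

lemma sum_cons_phi (d m : ℕ) (φ : Ed d → ℝ) (x : Ed d) (y : Fin m → Ed d) :
    (∑ i : Fin (m+1), φ ((Fin.cons x y : Fin (m+1) → Ed d) i)) = φ x + ∑ i, φ (y i) := by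
  rw [Fin.sum_univ_succ]
  simp

/-- P2 -/
lemma F0_le_elt (d m : ℕ) (φ : Ed d → ℝ) (B : ℝ) (hB : ∀ x, |φ x| ≤ B)
    (x : Ed d) (y : Fin m → Ed d) (hy : headCost d m x y ≠ ⊤) :
    F0 d m φ x ≤ ((m+1:ℕ) : ℝ) * (headCost d m x y).toReal - ∑ i, φ (y i) :=
  csInf_le (TSet_bddBelow d m φ B hB x) ⟨y, hy, rfl⟩

/-- P3 -/
lemma F0_ge_phi (d m : ℕ) (hd : 1 ≤ d) (φ : Ed d → ℝ) (B : ℝ) (hB0 : 0 ≤ B)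
    (hB : ∀ x, |φ x| ≤ B) (x : Ed d) :
    φ x - ((m+1:ℕ) : ℝ) * Mfun d (m+1) φ ≤ F0 d m φ x := by
  apply le_csInf (TSet_nonempty d m hd φ x)
  rintro r ⟨y, hy, rfl⟩
  have hz : coulomb d (m+1) (Fin.cons x y) ≠ ⊤ := by
    rw [coulomb_cons]; exact hy
  have h1 := le_Mfun d (m+1) φ B hB0 (fun z => (abs_le.1 (hB z)).2) (Fin.cons x y) hz
  rw [coulomb_cons d m x y] at h1
  rw [sum_cons_phi] at h1
  have hnpos : (0:ℝ) < ((m+1:ℕ) : ℝ) := by positivity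
  rw [sub_le_iff_le_add, div_le_iff₀ hnpos] at h1
  nlinarith

/-- P5 : uniform upper bound -/
lemma F0_le_K (d m : ℕ) (hd : 1 ≤ d) (φ : Ed d → ℝ) (B : ℝ) (hB : ∀ x, |φ x| ≤ B)
    (x : Ed d) :
    F0 d m φ x ≤ ((m+1:ℕ) : ℝ) * ((m:ℝ) + (m:ℝ)*(m:ℝ)) + (m:ℝ)*B := by
  obtain ⟨y, hy1, hy2⟩ := exists_spread d hd m x 1 le_rfl
  have hne := headCost_ne_top_of_spread d m x y hy1 hy2
  have hle := headCost_le_of_spread d m x y hy1 hy2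
  have ht : (headCost d m x y).toReal ≤ (m:ℝ) + (m:ℝ)*(m:ℝ) := by
    have h2 := ENNReal.toReal_mono (ENNReal.natCast_ne_top (m + m*m)) hle
    simp only [ENNReal.toReal_natCast] at h2
    push_cast at h2
    linarith
  have h3 := F0_le_elt d m φ B hB x y hne
  have h4 : -(∑ i, φ (y i)) ≤ (m:ℝ)*B := by
    have : -((m:ℝ)*B) ≤ (∑ i, φ (y i)) := by
      calc -((m:ℝ)*B) = ∑ _i : Fin m, (-B) := by simp [mul_comm]
        _ ≤ ∑ i, φ (y i) := Finset.sum_le_sum fun i _ => (abs_le.1 (hB (y i))).1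
    linarith
  have hnpos : (0:ℝ) ≤ ((m+1:ℕ) : ℝ) := by positivity
  nlinarith

lemma inv_edist_toReal {X : Type*} [MetricSpace X] (a b : X) :
    ((edist a b)⁻¹).toReal = (dist a b)⁻¹ := by
  rw [ENNReal.toReal_inv, edist_dist, ENNReal.toReal_ofReal dist_nonneg]

lemma headCost_ne_top (d m : ℕ) (x : Ed d) (y : Fin m → Ed d)
    (hx : ∀ i, x ≠ y i) (hy : coulomb d m y ≠ ⊤) : headCost d m x y ≠ ⊤ := by
  unfold headCost
  apply ENNReal.add_ne_top.2
  constructor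
  · apply ENNReal.sum_ne_top.2
    intro i _
    rw [ENNReal.inv_ne_top]
    simpa [edist_eq_zero] using hx i
  · exact hy

lemma headCost_toReal (d m : ℕ) (x : Ed d) (y : Fin m → Ed d)
    (h : headCost d m x y ≠ ⊤) :
    (headCost d m x y).toReal = (∑ i, (dist x (y i))⁻¹) + (coulomb d m y).toReal := by
  unfold headCost at h ⊢
  rw [ENNReal.toReal_add (ENNReal.add_ne_top.1 h).1 (ENNReal.add_ne_top.1 h).2]
  congr 1
  rw [ENNReal.toReal_sum (fun i _ => ne_top_of_le_ne_top (ENNReal.add_ne_top.1 h).1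
    (Finset.single_le_sum (fun j _ => zero_le) (Finset.mem_univ i)))]
  exact Finset.sum_congr rfl fun i _ => inv_edist_toReal x (y i)
/-- P4: upper bound at infinity -/
lemma F0_vanish (d m : ℕ) (hd : 1 ≤ d) (hm : 1 ≤ m) (φ : Ed d → ℝ)
    (B : ℝ) (hB0 : 0 ≤ B) (hB : ∀ x, |φ x| ≤ B) (ε : ℝ) (hε : 0 < ε) :
    ∃ R : ℝ, ∀ x : Ed d, R ≤ ‖x‖ →
      F0 d m φ x ≤ -(((m+1:ℕ) : ℝ) * Aconst d m φ) + ε := by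
  set n : ℝ := ((m+1:ℕ) : ℝ) with hn
  have hnpos : (0:ℝ) < n := by rw [hn]; positivity
  clear_value n
  have hmpos : (0:ℝ) < (m:ℝ) := by exact_mod_cast hm
  have hε2 : 0 < ε / (2*n) := by positivity
  obtain ⟨y, hcy, hval⟩ := Mfun_approx d m hd (tphi d m φ) (ε/(2*n)) hε2
  rw [tphi_sum_div d m hm φ y, ← hn] at hval
  set r0 : ℝ := 1 + 2*n*(m:ℝ)/ε with hr0
  have hr0pos : 0 < r0 := by rw [hr0]; positivity
  clear_value r0
  have hr0ge : 2*n*(m:ℝ)/ε ≤ r0 := by linarith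
  refine ⟨(∑ i, ‖y i‖) + r0, fun x hx => ?_⟩
  have hydist : ∀ i, r0 ≤ dist x (y i) := by
    intro i
    have h1 : ‖y i‖ ≤ ∑ j, ‖y j‖ :=
      Finset.single_le_sum (fun j _ => norm_nonneg (y j)) (Finset.mem_univ i)
    have h2 : ‖x‖ - ‖y i‖ ≤ ‖x - y i‖ := norm_sub_norm_le x (y i)
    rw [dist_eq_norm]
    linarith
  have hxy : ∀ i, x ≠ y i := by
    intro i h
    have := hydist i
    rw [h, dist_self] at this
    linarith
  have hne : headCost d m x y ≠ ⊤ := headCost_ne_top d m x y hxy hcy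
  have h3 := F0_le_elt d m φ B hB x y hne
  rw [headCost_toReal d m x y hne, ← hn] at h3
  have hinv : (∑ i, (dist x (y i))⁻¹) ≤ (m:ℝ) / r0 := by
    calc (∑ i, (dist x (y i))⁻¹) ≤ ∑ _i : Fin m, r0⁻¹ := by
          apply Finset.sum_le_sum
          intro i _
          exact inv_anti₀ hr0pos (hydist i)
      _ = (m:ℝ) / r0 := by rw [Finset.sum_const]; simp [div_eq_mul_inv, mul_comm]
  have hval' : Aconst d m φ - ε/(2*n) < (∑ i, φ (y i)) / n - (coulomb d m y).toReal := hval
  have hsumphi : n * (Aconst d m φ - ε/(2*n) + (coulomb d m y).toReal) ≤ ∑ i, φ (y i) := by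
    have h4 : Aconst d m φ - ε/(2*n) + (coulomb d m y).toReal ≤ (∑ i, φ (y i)) / n := by
      linarith
    calc n * (Aconst d m φ - ε/(2*n) + (coulomb d m y).toReal)
        ≤ n * ((∑ i, φ (y i)) / n) := by nlinarith
      _ = ∑ i, φ (y i) := by field_simp
  have hr0bound : n * ((m:ℝ)/r0) ≤ ε/2 := by
    rw [div_le_iff₀ hε] at hr0ge
    have h7 : n*(m:ℝ)/r0 ≤ ε/2 := by
      rw [div_le_iff₀ hr0pos]
      linarith
    rw [mul_div_assoc] at h7
    exact h7
  have hc0 : (0:ℝ) ≤ (coulomb d m y).toReal := ENNReal.toReal_nonneg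
  calc F0 d m φ x ≤ n * ((∑ i, (dist x (y i))⁻¹) + (coulomb d m y).toReal) - ∑ i, φ (y i) := h3
    _ ≤ n * ((m:ℝ)/r0 + (coulomb d m y).toReal)
        - (n * (Aconst d m φ - ε/(2*n) + (coulomb d m y).toReal)) := by nlinarith
    _ = n * ((m:ℝ)/r0) - n * Aconst d m φ + ε/2 := by field_simp; ring
    _ ≤ -(n * Aconst d m φ) + ε := by linarith
lemma headCost_pts_ne (d m : ℕ) (x : Ed d) (y : Fin m → Ed d)
    (hy : headCost d m x y ≠ ⊤) (i : Fin m) : x ≠ y i := by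
  intro hxy
  apply hy
  have h1 : (edist x (y i))⁻¹ = ⊤ := by
    rw [hxy, edist_self]; simp
  have h2 : (⊤:ℝ≥0∞) ≤ headCost d m x y := by
    rw [← h1]
    calc (edist x (y i))⁻¹ ≤ ∑ j, (edist x (y j))⁻¹ :=
          Finset.single_le_sum (f := fun j => (edist x (y j))⁻¹)
            (fun j _ => zero_le) (Finset.mem_univ i)
      _ ≤ headCost d m x y := le_self_add
  exact top_le_iff.1 h2

/-- P6: local Lipschitz bound -/
lemma F0_lip (d m : ℕ) (hd : 1 ≤ d) (φ : Ed d → ℝ) (B : ℝ) (hB0 : 0 ≤ B)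
    (hB : ∀ x, |φ x| ≤ B) :
    ∃ δ L : ℝ, 0 < δ ∧ 0 ≤ L ∧
      ∀ x x' : Ed d, dist x x' ≤ δ → F0 d m φ x' ≤ F0 d m φ x + L * dist x x' := by
  have hnpos : (0:ℝ) < ((m+1:ℕ) : ℝ) := by positivity
  set n : ℝ := ((m+1:ℕ) : ℝ) with hn
  set K : ℝ := n * ((m:ℝ) + (m:ℝ)*(m:ℝ)) + (m:ℝ)*B with hK
  set C1 : ℝ := max 1 ((K + 1 + (m:ℝ)*B)/n) with hC1
  have hC1pos : (0:ℝ) < C1 := lt_of_lt_of_le one_pos (le_max_left _ _)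
  refine ⟨C1⁻¹/2, n * (m:ℝ) * (2*C1*C1), by positivity, by positivity, ?_⟩
  intro x x' hxx
  have key : ∀ ε : ℝ, 0 < ε → ε ≤ 1 →
      F0 d m φ x' ≤ F0 d m φ x + n * (m:ℝ) * (2*C1*C1) * dist x x' + ε := by
    intro ε hε hε1
    obtain ⟨r, hrT, hrlt⟩ := exists_lt_of_csInf_lt (TSet_nonempty d m hd φ x)
      (show sInf (TSet d m φ x) < F0 d m φ x + ε by
        have hF : F0 d m φ x = sInf (TSet d m φ x) := rfl
        linarith)
    obtain ⟨y, hy, rfl⟩ := hrT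
    have hFK := F0_le_K d m hd φ B hB x
    rw [← hn] at hFK
    rw [← hK] at hFK
    have hsu : (∑ i, φ (y i)) ≤ (m:ℝ)*B := by
      calc (∑ i, φ (y i)) ≤ ∑ _i : Fin m, B := Finset.sum_le_sum fun i _ => (abs_le.1 (hB (y i))).2
        _ = (m:ℝ)*B := by simp [mul_comm]
    have hrlt' : n * (headCost d m x y).toReal - (∑ i, φ (y i)) < F0 d m φ x + ε := by
      rw [hn]; exact hrlt
    have hhcb : (headCost d m x y).toReal ≤ C1 := by
      have h1 : (headCost d m x y).toReal ≤ (K + 1 + (m:ℝ)*B)/n := by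
        rw [le_div_iff₀ hnpos]
        nlinarith
      exact h1.trans (le_max_right _ _)
    have hdy : ∀ i, C1⁻¹ ≤ dist x (y i) := by
      intro i
      have hpos : 0 < dist x (y i) := dist_pos.2 (headCost_pts_ne d m x y hy i)
      have hinvle : (dist x (y i))⁻¹ ≤ C1 := by
        have h3 : (dist x (y i))⁻¹ ≤ (headCost d m x y).toReal := by
          rw [headCost_toReal d m x y hy]
          have h4 : (dist x (y i))⁻¹ ≤ ∑ j, (dist x (y j))⁻¹ :=
            Finset.single_le_sum (f := fun j => (dist x (y j))⁻¹)
              (fun j _ => by positivity) (Finset.mem_univ i)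
          linarith [ENNReal.toReal_nonneg (a := coulomb d m y)]
        linarith
      have h5 : 1 ≤ C1 * dist x (y i) := by
        have h6 := mul_le_mul_of_nonneg_right hinvle hpos.le
        rwa [inv_mul_cancel₀ (ne_of_gt hpos)] at h6
      have h7 : C1⁻¹ * 1 ≤ C1⁻¹ * (C1 * dist x (y i)) :=
        mul_le_mul_of_nonneg_left h5 (by positivity)
      rwa [mul_one, ← mul_assoc, inv_mul_cancel₀ (ne_of_gt hC1pos), one_mul] at h7
    have hdy' : ∀ i, C1⁻¹/2 ≤ dist x' (y i) := by
      intro i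
      have htri := dist_triangle x x' (y i)
      linarith [hdy i]
    have hxy' : ∀ i, x' ≠ y i := by
      intro i h
      have h8 := hdy' i
      rw [h, dist_self] at h8
      have h9 : (0:ℝ) < C1⁻¹/2 := by positivity
      linarith
    have hne' : headCost d m x' y ≠ ⊤ :=
      headCost_ne_top d m x' y hxy' (ne_top_of_le_ne_top hy (coulomb_le_headCost d m x y))
    have hterm : ∀ i, (dist x' (y i))⁻¹ ≤ (dist x (y i))⁻¹ + (2*C1*C1) * dist x x' := by
      intro i
      have hapos : (0:ℝ) < dist x (y i) := lt_of_lt_of_le (by positivity) (hdy i)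
      have hbpos : (0:ℝ) < dist x' (y i) := lt_of_lt_of_le (by positivity) (hdy' i)
      have htri : dist x (y i) ≤ dist x x' + dist x' (y i) := dist_triangle x x' (y i)
      have ht0 : (0:ℝ) ≤ dist x x' := dist_nonneg
      have heq : (dist x' (y i))⁻¹ - (dist x (y i))⁻¹
          = (dist x (y i) - dist x' (y i)) / (dist x (y i) * dist x' (y i)) := by
        field_simp
      have h8 : (dist x (y i) - dist x' (y i)) / (dist x (y i) * dist x' (y i))
          ≤ dist x x' / (dist x (y i) * dist x' (y i)) :=
        (div_le_div_iff_of_pos_right (by positivity)).2 (by linarith)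
      have hab : C1⁻¹ * (C1⁻¹/2) ≤ dist x (y i) * dist x' (y i) :=
        mul_le_mul (hdy i) (hdy' i) (by positivity) hapos.le
      have hinvab : (dist x (y i) * dist x' (y i))⁻¹ ≤ (C1⁻¹ * (C1⁻¹/2))⁻¹ :=
        inv_anti₀ (by positivity) hab
      have hform : (C1⁻¹ * (C1⁻¹/2))⁻¹ = 2*C1*C1 := by
        field_simp
      have h9 : dist x x' / (dist x (y i) * dist x' (y i)) ≤ dist x x' * (2*C1*C1) := by
        rw [div_eq_mul_inv]
        calc dist x x' * (dist x (y i) * dist x' (y i))⁻¹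
            ≤ dist x x' * (C1⁻¹ * (C1⁻¹/2))⁻¹ := mul_le_mul_of_nonneg_left hinvab ht0
          _ = dist x x' * (2*C1*C1) := by rw [hform]
      linarith
    have hF' := F0_le_elt d m φ B hB x' y hne'
    rw [headCost_toReal d m x' y hne', ← hn] at hF'
    rw [headCost_toReal d m x y hy] at hrlt'
    have hsums : (∑ i, (dist x' (y i))⁻¹)
        ≤ (∑ i, (dist x (y i))⁻¹) + (m:ℝ) * ((2*C1*C1) * dist x x') := by
      calc (∑ i, (dist x' (y i))⁻¹)
          ≤ ∑ i, ((dist x (y i))⁻¹ + (2*C1*C1) * dist x x') :=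
            Finset.sum_le_sum fun i _ => hterm i
        _ = (∑ i, (dist x (y i))⁻¹) + (m:ℝ) * ((2*C1*C1) * dist x x') := by
            rw [Finset.sum_add_distrib, Finset.sum_const, Finset.card_univ,
              Fintype.card_fin, nsmul_eq_mul]
    have h10 := mul_le_mul_of_nonneg_left hsums (le_of_lt hnpos)
    linarith
  have hall : ∀ ε : ℝ, 0 < ε →
      F0 d m φ x' ≤ F0 d m φ x + n * (m:ℝ) * (2*C1*C1) * dist x x' + ε := by
    intro ε hε
    rcases le_or_gt ε 1 with h | h
    · exact key ε hε h
    · exact (key 1 one_pos le_rfl).trans (by linarith)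
  exact le_of_forall_pos_le_add hall

lemma F0_continuous (d m : ℕ) (hd : 1 ≤ d) (φ : Ed d → ℝ) (B : ℝ) (hB0 : 0 ≤ B)
    (hB : ∀ x, |φ x| ≤ B) : Continuous (F0 d m φ) := by
  obtain ⟨δ, L, hδ, hL, hlip⟩ := F0_lip d m hd φ B hB0 hB
  rw [Metric.continuous_iff]
  intro x ε hε
  refine ⟨min δ (ε/(2*(L+1))), lt_min hδ (by positivity), fun x' hx' => ?_⟩
  have h1 : dist x' x ≤ δ := (lt_min_iff.1 hx').1.le
  have h1' : dist x x' ≤ δ := by rwa [dist_comm]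
  have h2 := hlip x x' h1'
  have h3 := hlip x' x h1
  have h4 : dist x' x < ε/(2*(L+1)) := (lt_min_iff.1 hx').2
  have hu : (0:ℝ) < 2*(L+1) := by positivity
  have hL1 : L * (ε/(2*(L+1))) < ε := by
    rw [show L * (ε/(2*(L+1))) = (L*ε)/(2*(L+1)) from by ring, div_lt_iff₀ hu]
    nlinarith [mul_nonneg hL hε.le]
  have h5 : L * dist x' x < ε := by
    have h6 : L * dist x' x ≤ L * (ε/(2*(L+1))) := mul_le_mul_of_nonneg_left h4.le hL
    linarith
  have h7 : L * dist x x' < ε := by rwa [dist_comm x x']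
  rw [Real.dist_eq, abs_sub_lt_iff]
  constructor <;> linarith
lemma psi_pt (d m : ℕ) (φ : Ed d → ℝ) (x : Ed d) :
    (1 - 1/((m+1:ℕ):ℝ)) * φ x + (1/((m+1:ℕ):ℝ)) * hatphi d (m+1) φ x
      = (1 - 1/((m+1:ℕ):ℝ)) * φ x + (F0 d m φ x)/((m+1:ℕ):ℝ) + Aconst d m φ := by
  have hnpos : (0:ℝ) < ((m+1:ℕ):ℝ) := by positivity
  rw [hatphi_eq]
  field_simp
  ring

/-- part (iii) -/
lemma part3 (d m : ℕ) (hd : 1 ≤ d) (φ : Ed d → ℝ) (B : ℝ) (hB0 : 0 ≤ B)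
    (hB : ∀ x, |φ x| ≤ B) (x : Ed d) :
    φ x - (Mfun d (m+1) φ - Aconst d m φ)
      ≤ (1 - 1/((m+1:ℕ):ℝ)) * φ x + (1/((m+1:ℕ):ℝ)) * hatphi d (m+1) φ x := by
  rw [psi_pt]
  have hnpos : (0:ℝ) < ((m+1:ℕ):ℝ) := by positivity
  have h := F0_ge_phi d m hd φ B hB0 hB x
  have hkey : (1 - 1/((m+1:ℕ):ℝ)) * φ x + (F0 d m φ x)/((m+1:ℕ):ℝ) + Aconst d m φ
      - (φ x - (Mfun d (m+1) φ - Aconst d m φ))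
      = (F0 d m φ x - (φ x - ((m+1:ℕ):ℝ) * Mfun d (m+1) φ))/((m+1:ℕ):ℝ) := by
    field_simp
    ring
  have hnn : 0 ≤ (F0 d m φ x - (φ x - ((m+1:ℕ):ℝ) * Mfun d (m+1) φ))/((m+1:ℕ):ℝ) :=
    div_nonneg (by linarith) hnpos.le
  linarith

/-- part (ii), elementwise upper bound -/
lemma part2_elt (d m : ℕ) (hm : 1 ≤ m) (φ : Ed d → ℝ) (B : ℝ)
    (hB : ∀ x, |φ x| ≤ B) :
    ∀ r ∈ MSet d (m+1) (fun x => (1 - 1/((m+1:ℕ):ℝ)) * φ x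
      + (1/((m+1:ℕ):ℝ)) * hatphi d (m+1) φ x), r ≤ Aconst d m φ := by
  rintro r ⟨x, hx, rfl⟩
  show (∑ i, ((1 - 1/((m+1:ℕ):ℝ)) * φ (x i) + (1/((m+1:ℕ):ℝ)) * hatphi d (m+1) φ (x i)))
      / ((m+1:ℕ):ℝ) - (coulomb d (m+1) x).toReal ≤ Aconst d m φ
  have hnpos : (0:ℝ) < ((m+1:ℕ):ℝ) := by positivity
  have hid := sum_headCost_succAbove d m x
  have hfin : ∀ i : Fin (m+1), headCost d m (x i) (fun j => x (i.succAbove j)) ≠ ⊤ := by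
    intro i
    have hle : headCost d m (x i) (fun j => x (i.succAbove j))
        ≤ ∑ i' : Fin (m+1), headCost d m (x i') (fun j => x (i'.succAbove j)) :=
      Finset.single_le_sum (f := fun i' => headCost d m (x i') (fun j => x (i'.succAbove j)))
        (fun _ _ => zero_le) (Finset.mem_univ i)
    rw [hid] at hle
    have htop : ((m+1) : ℕ) • coulomb d (m+1) x ≠ ⊤ := by
      rw [nsmul_eq_mul]
      exact ENNReal.mul_ne_top (ENNReal.natCast_ne_top _) hx
    exact ne_top_of_le_ne_top htop hle
  have hreal : (∑ i : Fin (m+1), (headCost d m (x i) (fun j => x (i.succAbove j))).toReal)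
      = ((m+1:ℕ):ℝ) * (coulomb d (m+1) x).toReal := by
    rw [← ENNReal.toReal_sum (fun i _ => hfin i), hid, nsmul_eq_mul, ENNReal.toReal_mul,
      ENNReal.toReal_natCast]
  have hFi : ∀ i : Fin (m+1), F0 d m φ (x i)
      ≤ ((m+1:ℕ):ℝ) * (headCost d m (x i) (fun j => x (i.succAbove j))).toReal
        - ∑ j, φ (x (i.succAbove j)) :=
    fun i => F0_le_elt d m φ B hB (x i) _ (hfin i)
  have hphisum : (∑ i : Fin (m+1), ∑ j : Fin m, φ (x (i.succAbove j)))
      = (m:ℝ) * ∑ i, φ (x i) := by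
    have h1 : ∀ i : Fin (m+1), (∑ j : Fin m, φ (x (i.succAbove j)))
        = (∑ a, φ (x a)) - φ (x i) := by
      intro i
      have h2 := Fin.sum_univ_succAbove (fun a => φ (x a)) i
      linarith
    rw [Finset.sum_congr rfl (fun i _ => h1 i), Finset.sum_sub_distrib, Finset.sum_const,
      Finset.card_univ, Fintype.card_fin, nsmul_eq_mul]
    push_cast
    ring
  have hFS : (∑ i : Fin (m+1), F0 d m φ (x i))
      ≤ ((m+1:ℕ):ℝ) * (((m+1:ℕ):ℝ) * (coulomb d (m+1) x).toReal)
        - (m:ℝ) * ∑ i, φ (x i) := by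
    calc (∑ i : Fin (m+1), F0 d m φ (x i))
        ≤ ∑ i : Fin (m+1), (((m+1:ℕ):ℝ)
            * (headCost d m (x i) (fun j => x (i.succAbove j))).toReal
            - ∑ j, φ (x (i.succAbove j))) := Finset.sum_le_sum fun i _ => hFi i
      _ = ((m+1:ℕ):ℝ) * (∑ i : Fin (m+1),
            (headCost d m (x i) (fun j => x (i.succAbove j))).toReal)
          - ∑ i : Fin (m+1), ∑ j, φ (x (i.succAbove j)) := by
          rw [Finset.sum_sub_distrib, Finset.mul_sum]
      _ = ((m+1:ℕ):ℝ) * (((m+1:ℕ):ℝ) * (coulomb d (m+1) x).toReal)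
          - (m:ℝ) * ∑ i, φ (x i) := by rw [hreal, hphisum]
  have hpsisum : (∑ i : Fin (m+1), ((1 - 1/((m+1:ℕ):ℝ)) * φ (x i)
        + (1/((m+1:ℕ):ℝ)) * hatphi d (m+1) φ (x i)))
      = (1 - 1/((m+1:ℕ):ℝ)) * (∑ i, φ (x i))
        + (∑ i : Fin (m+1), F0 d m φ (x i))/((m+1:ℕ):ℝ)
        + ((m+1:ℕ):ℝ) * Aconst d m φ := by
    rw [Finset.sum_congr rfl (fun i _ => psi_pt d m φ (x i))]
    rw [Finset.sum_add_distrib, Finset.sum_add_distrib, ← Finset.mul_sum, ← Finset.sum_div,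
      Finset.sum_const, Finset.card_univ, Fintype.card_fin, nsmul_eq_mul]
  have hmn : (m:ℝ) = ((m+1:ℕ):ℝ) - 1 := by push_cast; ring
  rw [hmn] at hFS
  rw [hpsisum]
  have hkey : Aconst d m φ
      - (((1 - 1/((m+1:ℕ):ℝ)) * (∑ i, φ (x i))
          + (∑ i : Fin (m+1), F0 d m φ (x i))/((m+1:ℕ):ℝ)
          + ((m+1:ℕ):ℝ) * Aconst d m φ)/((m+1:ℕ):ℝ) - (coulomb d (m+1) x).toReal)
      = (((m+1:ℕ):ℝ) * (((m+1:ℕ):ℝ) * (coulomb d (m+1) x).toReal)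
          - (((m+1:ℕ):ℝ) - 1) * (∑ i, φ (x i)) - (∑ i : Fin (m+1), F0 d m φ (x i)))
        / (((m+1:ℕ):ℝ) * ((m+1:ℕ):ℝ)) := by
    field_simp
    ring
  have hnum : 0 ≤ (((m+1:ℕ):ℝ) * (((m+1:ℕ):ℝ) * (coulomb d (m+1) x).toReal)
      - (((m+1:ℕ):ℝ) - 1) * (∑ i, φ (x i)) - (∑ i : Fin (m+1), F0 d m φ (x i))) := by
    linarith
  have hfrac : 0 ≤ (((m+1:ℕ):ℝ) * (((m+1:ℕ):ℝ) * (coulomb d (m+1) x).toReal)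
      - (((m+1:ℕ):ℝ) - 1) * (∑ i, φ (x i)) - (∑ i : Fin (m+1), F0 d m φ (x i)))
        / (((m+1:ℕ):ℝ) * ((m+1:ℕ):ℝ)) := div_nonneg hnum (by positivity)
  linarith
/-- part (ii) -/
lemma part2 (d m : ℕ) (hd : 1 ≤ d) (hm : 1 ≤ m) (φ : Ed d → ℝ) (B : ℝ)
    (hB0 : 0 ≤ B) (hB : ∀ x, |φ x| ≤ B) :
    Mfun d (m+1) (fun x => (1 - 1/((m+1:ℕ):ℝ)) * φ x
      + (1/((m+1:ℕ):ℝ)) * hatphi d (m+1) φ x) = Aconst d m φ := by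
  apply le_antisymm
  · exact Mfun_le d (m+1) hd _ _ (part2_elt d m hm φ B hB)
  · have h1 : Mfun d (m+1) (fun x => φ x - (Mfun d (m+1) φ - Aconst d m φ))
        = Mfun d (m+1) φ - (Mfun d (m+1) φ - Aconst d m φ) :=
      Mfun_sub_const d (m+1) hd (Nat.succ_pos m) φ _ B hB0 hB
    have h2 : Mfun d (m+1) (fun x => φ x - (Mfun d (m+1) φ - Aconst d m φ))
        ≤ Mfun d (m+1) (fun x => (1 - 1/((m+1:ℕ):ℝ)) * φ x
          + (1/((m+1:ℕ):ℝ)) * hatphi d (m+1) φ x) :=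
      Mfun_mono d (m+1) hd _ _ (fun x => part3 d m hd φ B hB0 hB x)
        ⟨Aconst d m φ, fun s hs => part2_elt d m hm φ B hB s hs⟩
    linarith

/-- part (i) -/
lemma part1 (d m : ℕ) (hd : 1 ≤ d) (hm : 1 ≤ m) (φ : Ed d → ℝ) (B : ℝ)
    (hB0 : 0 ≤ B) (hB : ∀ x, |φ x| ≤ B) : IsC0 d (hatphi d (m+1) φ) := by
  have heq : hatphi d (m+1) φ = fun x => F0 d m φ x + ((m+1:ℕ):ℝ) * Aconst d m φ :=
    funext fun x => hatphi_eq d m φ x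
  constructor
  · rw [heq]
    exact (F0_continuous d m hd φ B hB0 hB).add continuous_const
  · rw [Metric.tendsto_nhds]
    intro ε hε
    obtain ⟨R, hR⟩ := F0_vanish d m hd hm φ B hB0 hB (ε/2) (by positivity)
    have hevent : ∀ᶠ x : Ed d in cocompact (Ed d), R ≤ ‖x‖ :=
      tendsto_norm_cocompact_atTop.eventually_ge_atTop R
    filter_upwards [hevent] with x hx
    have h1 := hR x hx
    have h2 := F0_ge d m hd hm φ B hB0 hB x
    have h3 : hatphi d (m+1) φ x = F0 d m φ x + ((m+1:ℕ):ℝ) * Aconst d m φ :=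
      hatphi_eq d m φ x
    rw [Real.dist_eq, sub_zero, abs_lt, h3]
    constructor <;> linarith

/-- bounds for hatphi -/
lemma hatphi_bounds (d m : ℕ) (hd : 1 ≤ d) (hm : 1 ≤ m) (φ : Ed d → ℝ) (B : ℝ)
    (hB0 : 0 ≤ B) (hB : ∀ x, |φ x| ≤ B) (x : Ed d) :
    0 ≤ hatphi d (m+1) φ x ∧
      hatphi d (m+1) φ x ≤ ((m+1:ℕ):ℝ) * ((m:ℝ) + (m:ℝ)*(m:ℝ)) + (m:ℝ)*B
        + ((m+1:ℕ):ℝ) * Aconst d m φ := by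
  have h1 := F0_ge d m hd hm φ B hB0 hB x
  have h2 := F0_le_K d m hd φ B hB x
  have h3 : hatphi d (m+1) φ x = F0 d m φ x + ((m+1:ℕ):ℝ) * Aconst d m φ :=
    hatphi_eq d m φ x
  rw [h3]
  constructor <;> linarith


/-- Let φ ∈ C₀, `Δ_N(φ) = M_N(φ) - M_{N-1}(((N-1)/N)φ)` and
`ψ = (1 - 1/N)φ + (1/N)φ̂`.  Then (i) φ̂ ∈ C₀; (ii) `M_N(ψ) = M_{N-1}(((N-1)/N)φ)`;
(iii) `ψ ≥ φ - Δ_N(φ)` pointwise; (iv) for every ρ ∈ 𝒫⁻,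
`∫ψ dρ - M_N(ψ) ≥ ∫φ dρ - M_N(φ) + (1 - ‖ρ‖) Δ_N(φ)`. -/
theorem hatphi_properties (d N : ℕ) (hd : 1 ≤ d) (hN : 2 ≤ N)
    (φ : Ed d → ℝ) (hφ : IsC0 d φ) :
    IsC0 d (hatphi d N φ) ∧
    Mfun d N (fun x => (1 - 1 / (N : ℝ)) * φ x + (1 / (N : ℝ)) * hatphi d N φ x)
      = Mfun d (N - 1) (fun x => (((N : ℝ) - 1) / N) * φ x) ∧
    (∀ x : Ed d,
      φ x - (Mfun d N φ - Mfun d (N - 1) (fun z => (((N : ℝ) - 1) / N) * φ z))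
        ≤ (1 - 1 / (N : ℝ)) * φ x + (1 / (N : ℝ)) * hatphi d N φ x) ∧
    (∀ ρ : Measure (Ed d), ρ Set.univ ≤ 1 →
      (∫ x, φ x ∂ρ) - Mfun d N φ
          + (1 - (ρ Set.univ).toReal)
              * (Mfun d N φ - Mfun d (N - 1) (fun z => (((N : ℝ) - 1) / N) * φ z))
        ≤ (∫ x, ((1 - 1 / (N : ℝ)) * φ x + (1 / (N : ℝ)) * hatphi d N φ x) ∂ρ)
            - Mfun d N (fun x => (1 - 1 / (N : ℝ)) * φ x + (1 / (N : ℝ)) * hatphi d N φ x)) := by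

  obtain ⟨m, rfl⟩ : ∃ m, N = m + 1 := ⟨N - 1, (Nat.succ_pred_eq_of_pos (by omega)).symm⟩
  have hm : 1 ≤ m := by omega
  obtain ⟨B, hB0, hB⟩ := bound_of_isC0 hφ
  have key2 : Mfun d (m+1) (fun x => (1 - 1/((m+1:ℕ):ℝ)) * φ x
      + (1/((m+1:ℕ):ℝ)) * hatphi d (m+1) φ x) = Aconst d m φ :=
    part2 d m hd hm φ B hB0 hB
  have key3 : ∀ x : Ed d, φ x - (Mfun d (m+1) φ - Aconst d m φ)
      ≤ (1 - 1/((m+1:ℕ):ℝ)) * φ x + (1/((m+1:ℕ):ℝ)) * hatphi d (m+1) φ x :=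
    fun x => part3 d m hd φ B hB0 hB x
  refine ⟨part1 d m hd hm φ B hB0 hB, key2, key3, ?_⟩
  intro ρ hρ
  haveI : IsFiniteMeasure ρ := ⟨lt_of_le_of_lt hρ ENNReal.one_lt_top⟩
  show (∫ x, φ x ∂ρ) - Mfun d (m+1) φ
      + (1 - (ρ Set.univ).toReal) * (Mfun d (m+1) φ - Aconst d m φ)
    ≤ (∫ x, ((1 - 1/((m+1:ℕ):ℝ)) * φ x + (1/((m+1:ℕ):ℝ)) * hatphi d (m+1) φ x) ∂ρ)
      - Mfun d (m+1) (fun x => (1 - 1/((m+1:ℕ):ℝ)) * φ x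
          + (1/((m+1:ℕ):ℝ)) * hatphi d (m+1) φ x)
  rw [key2]
  set Ch : ℝ := ((m+1:ℕ):ℝ) * ((m:ℝ) + (m:ℝ)*(m:ℝ)) + (m:ℝ)*B
      + ((m+1:ℕ):ℝ) * Aconst d m φ with hCh
  have hhb : ∀ x : Ed d, 0 ≤ hatphi d (m+1) φ x ∧ hatphi d (m+1) φ x ≤ Ch :=
    fun x => hatphi_bounds d m hd hm φ B hB0 hB x
  have hCh0 : 0 ≤ Ch := le_trans (hhb 0).1 (hhb 0).2
  have hnpos : (0:ℝ) < ((m+1:ℕ):ℝ) := by positivity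
  have hfrac1 : 1/((m+1:ℕ):ℝ) ≤ 1 := by
    rw [div_le_one hnpos]
    exact_mod_cast Nat.one_le_iff_ne_zero.2 (Nat.succ_ne_zero m)
  have hfrac0 : (0:ℝ) ≤ 1 - 1/((m+1:ℕ):ℝ) := by linarith
  have hψbound : ∀ x : Ed d, |(1 - 1/((m+1:ℕ):ℝ)) * φ x
      + (1/((m+1:ℕ):ℝ)) * hatphi d (m+1) φ x| ≤ B + Ch := by
    intro x
    have h4 := abs_add_le ((1 - 1/((m+1:ℕ):ℝ)) * φ x) ((1/((m+1:ℕ):ℝ)) * hatphi d (m+1) φ x)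
    rw [abs_mul, abs_mul] at h4
    have h5 : |1 - 1/((m+1:ℕ):ℝ)| = 1 - 1/((m+1:ℕ):ℝ) := abs_of_nonneg hfrac0
    have h6 : |1/((m+1:ℕ):ℝ)| = 1/((m+1:ℕ):ℝ) := abs_of_nonneg (by positivity)
    have h7 : |hatphi d (m+1) φ x| = hatphi d (m+1) φ x := abs_of_nonneg (hhb x).1
    rw [h5, h6, h7] at h4
    have hip : (0:ℝ) ≤ 1/((m+1:ℕ):ℝ) := by positivity
    have h8 : (1 - 1/((m+1:ℕ):ℝ)) * |φ x| ≤ 1 * B :=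
      mul_le_mul (by linarith) (hB x) (abs_nonneg _) zero_le_one
    have h9 : (1/((m+1:ℕ):ℝ)) * hatphi d (m+1) φ x ≤ 1 * Ch :=
      mul_le_mul hfrac1 (hhb x).2 (hhb x).1 zero_le_one
    rw [one_mul] at h8 h9
    linarith
  have hψcont : Continuous (fun x : Ed d => (1 - 1/((m+1:ℕ):ℝ)) * φ x
      + (1/((m+1:ℕ):ℝ)) * hatphi d (m+1) φ x) :=
    (continuous_const.mul hφ.1).add
      (continuous_const.mul (part1 d m hd hm φ B hB0 hB).1)
  have hIψ : Integrable (fun x : Ed d => (1 - 1/((m+1:ℕ):ℝ)) * φ x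
      + (1/((m+1:ℕ):ℝ)) * hatphi d (m+1) φ x) ρ :=
    Integrable.mono' (integrable_const (B + Ch)) hψcont.aestronglyMeasurable
      (Filter.Eventually.of_forall fun x => by rw [Real.norm_eq_abs]; exact hψbound x)
  have hIφ : Integrable φ ρ :=
    Integrable.mono' (integrable_const B) hφ.1.aestronglyMeasurable
      (Filter.Eventually.of_forall fun x => by rw [Real.norm_eq_abs]; exact hB x)
  have hIφΔ : Integrable (fun x => φ x - (Mfun d (m+1) φ - Aconst d m φ)) ρ :=
    hIφ.sub (integrable_const _)
  have hmono : (∫ x, (φ x - (Mfun d (m+1) φ - Aconst d m φ)) ∂ρ)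
      ≤ ∫ x, ((1 - 1/((m+1:ℕ):ℝ)) * φ x
        + (1/((m+1:ℕ):ℝ)) * hatphi d (m+1) φ x) ∂ρ :=
    integral_mono hIφΔ hIψ (fun x => key3 x)
  rw [integral_sub hIφ (integrable_const _), integral_const, smul_eq_mul, measureReal_def] at hmono
  linarith

end
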